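/- Let M_F = I_T − F(F'F)⁻¹F' for a T×k matrix F of full column rank, and let ε ∈ ℝ^T. Then ε' M_F ε = vec(M_F)'(ε ⊗ ε), and Tr(M_F) = T − k. Moreover, with A₂ = I_{T²} + 𝒦_T − 2 diag(𝒦_T) + vec(I_T)vec(I_T)', where 𝒦_T is the T²×T² commutation matrix, one has vec(M_F)' A₂ vec(M_F) = 2(T − k − a) + (T − k)², where a = ∑_{t=1}^T ((M_F)_{tt})². -/

import Mathlib

open Matrix

/-- `vec` of a square matrix, as a function on the product index type. -/
def mvec {T : ℕ} (M : Matrix (Fin T) (Fin T) ℝ) : Fin T × Fin T → ℝ := fun p => M p.1 p.2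

/-- The commutation matrix `𝒦_T`, characterized by `𝒦_T vec(B) = vec(Bᵀ)`. -/
def commMat (T : ℕ) : Matrix (Fin T × Fin T) (Fin T × Fin T) ℝ :=
  fun p q => if q = (p.2, p.1) then 1 else 0

/-- `diag(𝒦_T)`: the diagonal matrix with the diagonal of the commutation matrix. -/
def diagComm (T : ℕ) : Matrix (Fin T × Fin T) (Fin T × Fin T) ℝ :=
  Matrix.diagonal fun p => if p.1 = p.2 then 1 else 0

/-- `A₂ = I + 𝒦_T - 2 diag(𝒦_T) + vec(I)vec(I)'`. -/
def matA2 (T : ℕ) : Matrix (Fin T × Fin T) (Fin T × Fin T) ℝ :=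
  1 + commMat T - (2 : ℝ) • diagComm T +
    Matrix.vecMulVec (mvec (1 : Matrix (Fin T) (Fin T) ℝ)) (mvec 1)

/-!
`P = F(FᵀF)⁻¹Fᵀ` is a symmetric idempotent of trace `tr((FᵀF)⁻¹FᵀF) = k`, so `M_F = I - P` is a
symmetric idempotent of trace `T - k`. The bilinear form of `A₂` is
`vec(A)ᵀA₂vec(B) = tr(AᵀB) + tr(AB) - 2∑ₜ AₜₜBₜₜ + tr A tr B`, and for a symmetric idempotent `M`
both `tr(MᵀM)` and `tr(MM)` equal `tr M`.
-/

namespace Matrix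

theorem isUnit_of_rank_eq_card {n K : Type*} [Fintype n] [DecidableEq n] [Field K]
    (A : Matrix n n K) (h : A.rank = Fintype.card n) : IsUnit A := by
  rw [← linearIndependent_cols_iff_isUnit, linearIndependent_iff_card_eq_finrank_span,
    Set.finrank, ← rank_eq_finrank_span_cols, h]

section Projection

variable {m n R : Type*} [Fintype m] [Fintype n] [DecidableEq n] [CommRing R]

theorem isSymm_mul_inv_mul_transpose (F : Matrix m n R) :
    (F * (Fᵀ * F)⁻¹ * Fᵀ).IsSymm := by
  simp [IsSymm, transpose_mul, transpose_nonsing_inv, Matrix.mul_assoc]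

theorem isIdempotentElem_mul_inv_mul_transpose (F : Matrix m n R) (hF : IsUnit (Fᵀ * F)) :
    IsIdempotentElem (F * (Fᵀ * F)⁻¹ * Fᵀ) := by
  have hinv : Fᵀ * F * (Fᵀ * F)⁻¹ = 1 := mul_nonsing_inv _ ((isUnit_iff_isUnit_det _).mp hF)
  calc F * (Fᵀ * F)⁻¹ * Fᵀ * (F * (Fᵀ * F)⁻¹ * Fᵀ)
      = F * (Fᵀ * F)⁻¹ * (Fᵀ * F * (Fᵀ * F)⁻¹) * Fᵀ := by simp only [Matrix.mul_assoc]
    _ = F * (Fᵀ * F)⁻¹ * Fᵀ := by rw [hinv, Matrix.mul_one]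

theorem trace_mul_inv_mul_transpose (F : Matrix m n R) (hF : IsUnit (Fᵀ * F)) :
    (F * (Fᵀ * F)⁻¹ * Fᵀ).trace = Fintype.card n := by
  rw [trace_mul_comm, ← Matrix.mul_assoc,
    mul_nonsing_inv _ ((isUnit_iff_isUnit_det _).mp hF), trace_one]

end Projection

end Matrix

section Vectorization

variable {T : ℕ}

theorem dotProduct_mulVec_eq_mvec_dotProduct (M : Matrix (Fin T) (Fin T) ℝ) (ε : Fin T → ℝ) :
    ε ⬝ᵥ M *ᵥ ε = mvec M ⬝ᵥ fun p => ε p.1 * ε p.2 := by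
  simp only [dotProduct, mulVec, mvec, Fintype.sum_prod_type, Finset.mul_sum]
  exact Finset.sum_congr rfl fun _ _ => Finset.sum_congr rfl fun _ _ => by ring

theorem mvec_dotProduct_mvec (A B : Matrix (Fin T) (Fin T) ℝ) :
    mvec A ⬝ᵥ mvec B = (Aᵀ * B).trace := by
  simp only [dotProduct, mvec, Fintype.sum_prod_type, trace, diag, mul_apply, transpose_apply]
  exact Finset.sum_comm

theorem commMat_mulVec_mvec (B : Matrix (Fin T) (Fin T) ℝ) :
    commMat T *ᵥ mvec B = mvec Bᵀ := by
  ext p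
  simp [commMat, mulVec, dotProduct, mvec]

theorem mvec_dotProduct_diagComm_mulVec (A B : Matrix (Fin T) (Fin T) ℝ) :
    mvec A ⬝ᵥ diagComm T *ᵥ mvec B = ∑ t, A t t * B t t := by
  simp [diagComm, mulVec_diagonal, dotProduct, mvec, Fintype.sum_prod_type]

theorem mvec_dotProduct_matA2_mulVec (A B : Matrix (Fin T) (Fin T) ℝ) :
    mvec A ⬝ᵥ matA2 T *ᵥ mvec B =
      (Aᵀ * B).trace + (A * B).trace - 2 * ∑ t, A t t * B t t + A.trace * B.trace := by
  simp only [matA2, add_mulVec, sub_mulVec, one_mulVec, smul_mulVec, vecMulVec_mulVec,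
    dotProduct_add, dotProduct_sub, dotProduct_smul, commMat_mulVec_mvec,
    mvec_dotProduct_diagComm_mulVec, mvec_dotProduct_mvec, ← transpose_mul, trace_transpose,
    transpose_one, Matrix.one_mul, Matrix.mul_one, op_smul_eq_mul, smul_eq_mul]
  rw [trace_mul_comm B]

theorem mvec_dotProduct_matA2_mulVec_self {M : Matrix (Fin T) (Fin T) ℝ} (hsymm : M.IsSymm)
    (hidem : IsIdempotentElem M) :
    mvec M ⬝ᵥ matA2 T *ᵥ mvec M = 2 * (M.trace - ∑ t, M t t ^ 2) + M.trace ^ 2 := by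
  rw [mvec_dotProduct_matA2_mulVec, hsymm.eq, hidem.eq]
  simp only [sq]
  ring

end Vectorization

theorem stmt_19_general (T k : ℕ)
    (F : Matrix (Fin T) (Fin k) ℝ) (hF : F.rank = k)
    (MF : Matrix (Fin T) (Fin T) ℝ) (hMF : MF = 1 - F * (Fᵀ * F)⁻¹ * Fᵀ)
    (ε : Fin T → ℝ) :
    (ε ⬝ᵥ MF.mulVec ε = mvec MF ⬝ᵥ fun p => ε p.1 * ε p.2) ∧
      MF.trace = (T : ℝ) - k ∧
      mvec MF ⬝ᵥ (matA2 T).mulVec (mvec MF) =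
        2 * ((T : ℝ) - k - ∑ t, (MF t t) ^ 2) + ((T : ℝ) - k) ^ 2 := by
  have hunit : IsUnit (Fᵀ * F) :=
    isUnit_of_rank_eq_card _ (by rw [rank_transpose_mul_self, hF, Fintype.card_fin])
  have hsymm : MF.IsSymm := hMF ▸ isSymm_one.sub (isSymm_mul_inv_mul_transpose F)
  have hidem : IsIdempotentElem MF :=
    hMF ▸ (isIdempotentElem_mul_inv_mul_transpose F hunit).one_sub
  have htrace : MF.trace = (T : ℝ) - k := by
    rw [hMF, trace_sub, trace_one, trace_mul_inv_mul_transpose F hunit, Fintype.card_fin,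
      Fintype.card_fin]
  refine ⟨dotProduct_mulVec_eq_mvec_dotProduct MF ε, htrace, ?_⟩
  rw [mvec_dotProduct_matA2_mulVec_self hsymm hidem, htrace]

/-- for `M_F = I - F(F'F)⁻¹F'` with `F` of full column rank `k` and
any `ε ∈ ℝ^T`: `ε'M_Fε = vec(M_F)'(ε ⊗ ε)`, `Tr(M_F) = T - k`, and
`vec(M_F)' A₂ vec(M_F) = 2(T - k - a) + (T - k)²` where `a = ∑_t ((M_F)_{tt})²`. -/
theorem stmt_19 (T k : ℕ) (hk : k ≤ T)
    (F : Matrix (Fin T) (Fin k) ℝ) (hF : F.rank = k)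
    (MF : Matrix (Fin T) (Fin T) ℝ) (hMF : MF = 1 - F * (Fᵀ * F)⁻¹ * Fᵀ)
    (ε : Fin T → ℝ) :
    (ε ⬝ᵥ MF.mulVec ε = mvec MF ⬝ᵥ fun p => ε p.1 * ε p.2) ∧
      MF.trace = (T : ℝ) - k ∧
      mvec MF ⬝ᵥ (matA2 T).mulVec (mvec MF) =
        2 * ((T : ℝ) - k - ∑ t, (MF t t) ^ 2) + ((T : ℝ) - k) ^ 2 :=
  stmt_19_general T k F hF MF hMF ε
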